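/- arXiv:math/0306047 — 2 statements merged into one kernel-verified Lean document; each statement's English description precedes it below -/
import Mathlib

section
/- A binomial random variable B(n,p) with p ∈ [0,1) is stochastically dominated by a Poisson random variable with mean −n·ln(1−p). -/
/-!
Choose `r` with `exp (-r) = 1 - p`, so that `B(1, p)` and `Po(r)` have the same mass at `0` and
`Po(r)` puts all the rest on `{1, 2, …}`. Adding one Bernoulli trial gives the exact recurrence
`P(B(n+1) ≥ t) = (1 - p) P(B(n) ≥ t) + p P(B(n) ≥ t - 1)`, while `Po((n+1) r) = Po(r) ∗ Po(n r)`
satisfies the same relation with `≥`, because a summand `x ≥ 1` of `Po(r)` still leaves at most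
`t - 1` to be reached by `Po(n r)`. Induction on `n` concludes.
-/

open MeasureTheory ProbabilityTheory Set
open scoped ENNReal NNReal

namespace MeasureTheory.Measure

theorem conv_apply_eq_lintegral {M : Type*} [AddMonoid M] [MeasurableSpace M] [MeasurableAdd₂ M]
    (μ ν : Measure M) [SFinite ν] {s : Set M} (hs : MeasurableSet s) :
    (μ ∗ ν) s = ∫⁻ x, ν ((x + ·) ⁻¹' s) ∂μ := by
  rw [conv, map_apply (by fun_prop) hs, prod_apply (measurable_add hs)]
  rfl

theorem le_conv_Ici (μ ν : Measure ℕ) [SFinite ν] (t : ℕ) :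
    μ {0} * ν (Ici t) + μ {0}ᶜ * ν (Ici (t - 1)) ≤ (μ ∗ ν) (Ici t) := by
  have hpre (x : ℕ) : (x + ·) ⁻¹' Ici t = Ici (t - x) := by ext; simp [add_comm x]
  rw [conv_apply_eq_lintegral _ _ measurableSet_Ici,
    ← lintegral_add_compl _ (measurableSet_singleton 0), lintegral_singleton, mul_comm (μ {0}), mul_comm (μ {0}ᶜ), ← setLIntegral_const {0}ᶜ]
  simp only [hpre, Nat.sub_zero]
  refine add_le_add le_rfl (setLIntegral_mono .of_discrete fun x hx => ?_)
  exact measure_mono (Ici_subset_Ici.mpr (by simp at hx; omega))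

theorem le_conv_real_Ici (μ ν : Measure ℕ) [IsFiniteMeasure μ] [IsFiniteMeasure ν] (t : ℕ) :
    μ.real {0} * ν.real (Ici t) + μ.real {0}ᶜ * ν.real (Ici (t - 1)) ≤ (μ ∗ ν).real (Ici t) := by
  simp only [measureReal_def, ← ENNReal.toReal_mul]
  rw [← ENNReal.toReal_add (by finiteness) (by finiteness)]
  exact ENNReal.toReal_mono (by finiteness) (μ.le_conv_Ici ν t)

end MeasureTheory.Measure

namespace ProbabilityTheory

noncomputable def binomialTail (p : ℝ) (n t : ℕ) : ℝ :=
  ∑ k ∈ Finset.range (n + 1), if t ≤ k then (n.choose k : ℝ) * p ^ k * (1 - p) ^ (n - k) else 0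

theorem choose_mul_pow_mul_pow_succ (p : ℝ) (n k : ℕ) :
    ((n + 1).choose (k + 1) : ℝ) * p ^ (k + 1) * (1 - p) ^ (n + 1 - (k + 1)) =
      (1 - p) * ((n.choose (k + 1) : ℝ) * p ^ (k + 1) * (1 - p) ^ (n - (k + 1))) +
        p * ((n.choose k : ℝ) * p ^ k * (1 - p) ^ (n - k)) := by
  rw [Nat.choose_succ_succ', Nat.cast_add, Nat.add_sub_add_right]
  rcases lt_or_ge k n with hkn | hnk
  · rw [show n - k = n - (k + 1) + 1 by omega]
    ring
  · rw [Nat.choose_eq_zero_of_lt (by omega : n < k + 1), Nat.sub_eq_zero_of_le hnk]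
    ring

theorem binomialTail_succ (p : ℝ) (n t : ℕ) :
    binomialTail p (n + 1) t = (1 - p) * binomialTail p n t + p * binomialTail p n (t - 1) := by
  have hextend : binomialTail p n t = ∑ k ∈ Finset.range (n + 2),
      if t ≤ k then (n.choose k : ℝ) * p ^ k * (1 - p) ^ (n - k) else 0 := by
    rw [binomialTail, Finset.sum_range_succ _ (n + 1), Nat.choose_succ_self]
    simp
  have hshift : binomialTail p n (t - 1) = ∑ k ∈ Finset.range (n + 1),
      if t ≤ k + 1 then (n.choose k : ℝ) * p ^ k * (1 - p) ^ (n - k) else 0 := by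
    simp only [binomialTail, Nat.sub_le_iff_le_add]
  rw [hextend, hshift, binomialTail, Finset.sum_range_succ' _ (n + 1),
    Finset.sum_range_succ' _ (n + 1), mul_add, Finset.mul_sum, Finset.mul_sum, add_right_comm,
    ← Finset.sum_add_distrib]
  congr 1
  · refine Finset.sum_congr rfl fun k _ => ?_
    split_ifs
    · exact choose_mul_pow_mul_pow_succ p n k
    · simp
  · split_ifs
    · simp [pow_succ']
    · simp

theorem poissonMeasure_real_zero (r : ℝ≥0) : Po(r).real {0} = Real.exp (-r) := by
  simp [poissonMeasure_real_singleton]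

theorem poissonMeasure_real_compl_zero (r : ℝ≥0) : Po(r).real {0}ᶜ = 1 - Real.exp (-r) := by
  rw [probReal_compl_eq_one_sub (measurableSet_singleton 0), poissonMeasure_real_zero]

theorem poissonMeasure_real_Ici_add_ge (r s : ℝ≥0) (t : ℕ) :
    Real.exp (-r) * Po(s).real (Ici t) + (1 - Real.exp (-r)) * Po(s).real (Ici (t - 1)) ≤
      Po(r + s).real (Ici t) := by
  rw [← poissonMeasure_real_compl_zero, ← poissonMeasure_real_zero,
    ← poissonMeasure_conv_poissonMeasure]
  exact Po(r).le_conv_real_Ici Po(s) t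

theorem binomialTail_zero (p : ℝ) (t : ℕ) : binomialTail p 0 t = if t = 0 then 1 else 0 := by
  simp [binomialTail]

theorem binomialTail_le_poissonMeasure_real (r : ℝ≥0) (n t : ℕ) :
    binomialTail (1 - Real.exp (-r)) n t ≤ Po(n * r).real (Ici t) := by
  induction n generalizing t with
  | zero =>
    rw [binomialTail_zero]
    split_ifs with ht
    · simp [ht]
    · exact measureReal_nonneg
  | succ n ih =>
    have hp : 0 ≤ 1 - Real.exp (-r) := by simp [Real.exp_le_one_iff]
    calc binomialTail (1 - Real.exp (-r)) (n + 1) t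
        = Real.exp (-r) * binomialTail (1 - Real.exp (-r)) n t +
            (1 - Real.exp (-r)) * binomialTail (1 - Real.exp (-r)) n (t - 1) := by
          rw [binomialTail_succ, sub_sub_cancel]
      _ ≤ Real.exp (-r) * Po(n * r).real (Ici t) +
            (1 - Real.exp (-r)) * Po(n * r).real (Ici (t - 1)) := by
          gcongr
          exacts [ih t, ih (t - 1)]
      _ ≤ Po((n + 1 : ℕ) * r).real (Ici t) := by
          rw [show ((n + 1 : ℕ) : ℝ≥0) * r = r + n * r by push_cast; ring]
          exact poissonMeasure_real_Ici_add_ge r _ t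

theorem tsum_ite_poissonPMFReal (r : ℝ≥0) (t : ℕ) :
    ∑' k : ℕ, (if t ≤ k then poissonPMFReal r k else 0) = Po(r).real (Ici t) := by
  rw [measureReal_def, ← Measure.tsum_indicator_apply_singleton _ _ measurableSet_Ici,
    ENNReal.tsum_toReal_eq fun k =>
      ne_top_of_le_ne_top (measure_ne_top _ {k}) (indicator_le_self _ _ k)]
  refine tsum_congr fun k => ?_
  rw [indicator_apply, apply_ite ENNReal.toReal, ← measureReal_def, poissonMeasure_real_singleton]
  rfl

end ProbabilityTheory

/-- A binomial random variable `B(n,p)` is stochastically dominated by a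
Poisson random variable with mean `-n·ln(1-p)`:
for every `t`, `Pr(B(n,p) ≥ t) ≤ Pr(Po(-n ln(1-p)) ≥ t)`. -/
theorem binomial_stochDom_poisson (n : ℕ) (p : ℝ) (hp0 : 0 ≤ p) (hp1 : p < 1) (t : ℕ) :
    (∑ k ∈ Finset.range (n + 1),
        if t ≤ k then (n.choose k : ℝ) * p ^ k * (1 - p) ^ (n - k) else 0) ≤
      ∑' k : ℕ, if t ≤ k then
        poissonPMFReal (Real.toNNReal (-(n : ℝ) * Real.log (1 - p))) k else 0 := by
  set r := Real.toNNReal (-Real.log (1 - p))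
  have hlog : 0 ≤ -Real.log (1 - p) := by
    simpa using Real.log_nonpos (by linarith) (by linarith)
  have hp : p = 1 - Real.exp (-r) := by
    rw [Real.coe_toNNReal _ hlog, neg_neg, Real.exp_log (by linarith), sub_sub_cancel]
  have hrate : Real.toNNReal (-(n : ℝ) * Real.log (1 - p)) = n * r := by
    rw [neg_mul_comm, Real.toNNReal_mul n.cast_nonneg, Real.toNNReal_natCast]
  rw [hrate, tsum_ite_poissonPMFReal, hp]
  exact binomialTail_le_poissonMeasure_real r n t
end

section
/- Let c > 1 and let ρ* ∈ (0,1) satisfy c = ln(ρ*)/(ρ* − 1). Then ∫_{ρ*}^{1} (c − cρ + ln ρ)/2 dρ = (ρ* − 1)/2 − ((ρ* + 1)/4)·ln ρ*, and this quantity is positive. Moreover, as ρ* → 1⁻ this quantity is asymptotic to (1 − ρ*)³/24. -/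
/-!
The integrand has the elementary antiderivative `(c ρ - c ρ² / 2 + ρ log ρ - ρ) / 2`, and the
relation `log ρ* = c (ρ* - 1)` eliminates `c` from its value. Positivity is the inequality
`log x < 2 (x - 1) / (x + 1)` on `(0, 1)`, read off the series of `artanh`. For the asymptotics,
both the quantity and `(1 - ρ)³ / 24` vanish to second order at `1`, and two applications of
l'Hôpital's rule reduce the ratio to `1 / ρ²`.
-/

open MeasureTheory Filter Topology Real

theorem Real.log_lt_two_mul_sub_one_div_add_one {x : ℝ} (hx0 : 0 < x) (hx1 : x < 1) :
    log x < 2 * (x - 1) / (x + 1) := by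
  set y := (1 - x) / (1 + x) with hy
  have hy0 : 0 < y := div_pos (by linarith) (by linarith)
  have hy1 : |y| < 1 := by rw [abs_of_pos hy0, div_lt_one (by linarith)]; linarith
  have hquot : (1 + y) / (1 - y) = x⁻¹ := by rw [hy]; field_simp [hx0.ne']; ring
  have hlog : log (1 + y) - log (1 - y) = -log x := by
    rw [← log_div (by linarith) (by linarith [abs_lt.1 hy1]), hquot, log_inv]
  have hseries : 2 * y + 2 / 3 * y ^ 3 ≤ -log x := by
    have := sum_le_hasSum (Finset.range 2) (fun k _ => by positivity)
      (hasSum_log_sub_log_of_abs_lt_one hy1)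
    norm_num [Finset.sum_range_succ, hlog] at this
    linarith
  have hrhs : 2 * (x - 1) / (x + 1) = -2 * y := by rw [hy]; field_simp; ring
  rw [hrhs]
  linarith [pow_pos hy0 3]

open intervalIntegral in
theorem integral_sub_mul_add_log_div_two (c a : ℝ) :
    ∫ ρ in a..1, (c - c * ρ + log ρ) / 2 = c * (1 - a) ^ 2 / 4 + (a - 1 - a * log a) / 2 := by
  have hlin : IntervalIntegrable (fun ρ : ℝ => c - c * ρ) volume a 1 :=
    (by fun_prop : Continuous fun ρ : ℝ => c - c * ρ).intervalIntegrable _ _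
  rw [intervalIntegral.integral_div, integral_add hlin intervalIntegrable_log',
    integral_sub intervalIntegrable_const (intervalIntegrable_id.const_mul c),
    intervalIntegral.integral_const_mul]
  simp only [intervalIntegral.integral_const, integral_id, integral_log, log_one, smul_eq_mul]
  ring

namespace UnitClause

noncomputable def dissatisfied (ρ : ℝ) : ℝ := (ρ - 1) / 2 - (ρ + 1) / 4 * log ρ

noncomputable def dissatisfiedDeriv (ρ : ℝ) : ℝ := ((ρ - 1) / ρ - log ρ) / 4

theorem dissatisfied_pos {ρ : ℝ} (h0 : 0 < ρ) (h1 : ρ < 1) : 0 < dissatisfied ρ := by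
  have hlog := log_lt_two_mul_sub_one_div_add_one h0 h1
  rw [lt_div_iff₀ (by linarith)] at hlog
  unfold dissatisfied
  linarith

theorem hasDerivAt_dissatisfied {ρ : ℝ} (hρ : ρ ≠ 0) :
    HasDerivAt dissatisfied (dissatisfiedDeriv ρ) ρ := by
  refine ((((hasDerivAt_id ρ).sub_const 1).div_const 2).sub
    ((((hasDerivAt_id ρ).add_const 1).div_const 4).mul (hasDerivAt_log hρ))).congr_deriv ?_
  simp only [dissatisfiedDeriv, id_eq]
  field_simp
  ring

theorem hasDerivAt_dissatisfiedDeriv {ρ : ℝ} (hρ : ρ ≠ 0) :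
    HasDerivAt dissatisfiedDeriv ((1 - ρ) / (4 * ρ ^ 2)) ρ := by
  refine (((((hasDerivAt_id ρ).sub_const 1).div (hasDerivAt_id ρ) hρ).sub
    (hasDerivAt_log hρ)).div_const 4).congr_deriv ?_
  simp only [id_eq]
  field_simp
  ring

theorem hasDerivAt_one_sub_pow_three_div (ρ : ℝ) :
    HasDerivAt (fun ρ : ℝ => (1 - ρ) ^ 3 / 24) (-(1 - ρ) ^ 2 / 8) ρ := by
  refine ((((hasDerivAt_id ρ).const_sub 1).pow 3).div_const 24).congr_deriv ?_
  simp only [id_eq]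
  push_cast
  ring

theorem hasDerivAt_neg_one_sub_sq_div (ρ : ℝ) :
    HasDerivAt (fun ρ : ℝ => -(1 - ρ) ^ 2 / 8) ((1 - ρ) / 4) ρ := by
  refine (((((hasDerivAt_id ρ).const_sub 1).pow 2).neg).div_const 8).congr_deriv ?_
  simp only [id_eq]
  push_cast
  ring

theorem eventually_mem_Ioo_nhdsLT_one : ∀ᶠ ρ in 𝓝[<] (1 : ℝ), ρ ∈ Set.Ioo 0 1 :=
  Ioo_mem_nhdsLT one_pos

theorem tendsto_dissatisfiedDeriv_div :
    Tendsto (fun ρ => dissatisfiedDeriv ρ / (-(1 - ρ) ^ 2 / 8)) (𝓝[<] 1) (𝓝 1) := by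
  have hratio : Tendsto (fun ρ : ℝ => (1 - ρ) / (4 * ρ ^ 2) / ((1 - ρ) / 4)) (𝓝[<] 1) (𝓝 1) := by
    have hcont : ContinuousAt (fun ρ : ℝ => (ρ ^ 2)⁻¹) 1 := by fun_prop (disch := norm_num)
    have hlim : Tendsto (fun ρ : ℝ => (ρ ^ 2)⁻¹) (𝓝[<] 1) (𝓝 1) := by
      simpa using hcont.continuousWithinAt.tendsto (s := Set.Iio 1)
    refine hlim.congr' ?_
    filter_upwards [eventually_mem_Ioo_nhdsLT_one] with ρ ⟨_, h1⟩
    have : 1 - ρ ≠ 0 := by linarith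
    field_simp
  refine HasDerivAt.lhopital_zero_nhdsLT ?_ (.of_forall hasDerivAt_neg_one_sub_sq_div) ?_ ?_ ?_
    hratio
  · filter_upwards [eventually_mem_Ioo_nhdsLT_one] with ρ hρ
      using hasDerivAt_dissatisfiedDeriv hρ.1.ne'
  · filter_upwards [eventually_mem_Ioo_nhdsLT_one] with ρ ⟨_, h1⟩
    have : 0 < 1 - ρ := by linarith
    positivity
  · simpa [dissatisfiedDeriv] using
      (hasDerivAt_dissatisfiedDeriv one_ne_zero).continuousAt.continuousWithinAt.tendsto
        (s := Set.Iio 1)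
  · simpa using
      (hasDerivAt_neg_one_sub_sq_div 1).continuousAt.continuousWithinAt.tendsto (s := Set.Iio 1)

theorem tendsto_dissatisfied_div :
    Tendsto (fun ρ => dissatisfied ρ / ((1 - ρ) ^ 3 / 24)) (𝓝[<] 1) (𝓝 1) := by
  refine HasDerivAt.lhopital_zero_nhdsLT ?_ (.of_forall hasDerivAt_one_sub_pow_three_div)
    ?_ ?_ ?_ tendsto_dissatisfiedDeriv_div
  · filter_upwards [eventually_mem_Ioo_nhdsLT_one] with ρ hρ
      using hasDerivAt_dissatisfied hρ.1.ne'
  · filter_upwards [eventually_mem_Ioo_nhdsLT_one] with ρ ⟨_, h1⟩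
    have : 0 < (1 - ρ) ^ 2 := pow_pos (by linarith) 2
    linarith
  · simpa [dissatisfied] using
      (hasDerivAt_dissatisfied one_ne_zero).continuousAt.continuousWithinAt.tendsto
        (s := Set.Iio 1)
  · simpa using
      (hasDerivAt_one_sub_pow_three_div 1).continuousAt.continuousWithinAt.tendsto
        (s := Set.Iio 1)

end UnitClause

open UnitClause in
/-- For `c > 1` and `ρ* ∈ (0,1)` with `c = ln(ρ*)/(ρ*−1)`:
`∫_{ρ*}^1 (c − cρ + ln ρ)/2 dρ = (ρ*−1)/2 − ((ρ*+1)/4) ln ρ*`, this quantity is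
positive, and as `ρ* → 1⁻` it is asymptotic to `(1−ρ*)³/24`. -/
theorem unitClause_dissatisfied_integral :
    (∀ c ρs : ℝ, 1 < c → ρs ∈ Set.Ioo (0 : ℝ) 1 → c = Real.log ρs / (ρs - 1) →
      (∫ ρ in ρs..1, (c - c * ρ + Real.log ρ) / 2) =
          (ρs - 1) / 2 - ((ρs + 1) / 4) * Real.log ρs ∧
        0 < (ρs - 1) / 2 - ((ρs + 1) / 4) * Real.log ρs) ∧
    Tendsto (fun ρs : ℝ =>
        ((ρs - 1) / 2 - ((ρs + 1) / 4) * Real.log ρs) / ((1 - ρs) ^ 3 / 24))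
      (nhdsWithin 1 (Set.Iio 1)) (nhds 1) := by
  refine ⟨fun c ρs _ ⟨h0, h1⟩ hc => ⟨?_, dissatisfied_pos h0 h1⟩, tendsto_dissatisfied_div⟩
  have hlog : log ρs = c * (ρs - 1) := by rw [hc, div_mul_cancel₀ _ (sub_ne_zero.2 h1.ne)]
  rw [integral_sub_mul_add_log_div_two, hlog]
  ring
end
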